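/- arXiv:2504.20600 — 3 statements merged into one kernel-verified Lean document; each statement's English description precedes it below -/
import Mathlib

section
/- Let x₁ ≥ x₂ ≥ ... ≥ x_m be a citation vector, h its h-index and ν̄ its tempered ν̄-index, with m*(j) = #{i : x_i ≥ j} and S_k = x₁ + ... + x_k (S_0 = 0). Then h = ν̄ if and only if either h = m, or h < m and S_{m*(h+1)} < (h+1)². -/
/-!
Write `T(j) = Σ_{x_i ≥ j} x_i` (`sumAtLeast x j`); `T` is antitone in `j`. Since
`T(h) ≥ h · m*(h) ≥ h²`, we have `h ≤ ν̄`. The set defining `ν̄` is closed downwards in `[1, m]`,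
because `j ↦ j²` increases while `T` decreases, so `h < ν̄` exactly when `h + 1 ≤ m` and `(h + 1)² ≤ T(h + 1)`. For a
non-increasing vector the papers with at least `j` citations are the first `m*(j)` ones, so
`T(j) = S_{m*(j)}`, and the theorem is the negation of this criterion.
-/

open Finset

/-- Partial sum `S_k = x₁ + ⋯ + x_k` of a citation vector, with the natural
extension `S_k = S_m` for `k > m`. -/
def pSum {m : ℕ} (x : Fin m → ℕ) (k : ℕ) : ℕ :=
  ∑ i : Fin m, if (i : ℕ) < k then x i else 0

/-- `m*(j)`: the number of papers with at least `j` citations. -/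
def mStar {m : ℕ} (x : Fin m → ℕ) (j : ℕ) : ℕ :=
  (Finset.univ.filter fun i => j ≤ x i).card

/-- The Hirsch `h`-index: `h = max {j ≥ 1 : m*(j) ≥ j}` (max ∅ = 0). -/
noncomputable def hIndex {m : ℕ} (x : Fin m → ℕ) : ℕ :=
  sSup {j : ℕ | 1 ≤ j ∧ j ≤ mStar x j}

/-- The Egghe `g`-index: `g = max {1 ≤ k ≤ m : S_k ≥ k²}` (max ∅ = 0). -/
noncomputable def gIndex {m : ℕ} (x : Fin m → ℕ) : ℕ :=
  sSup {k : ℕ | 1 ≤ k ∧ k ≤ m ∧ k ^ 2 ≤ pSum x k}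

/-- The unconstrained `g*`-index: `g* = max {k ≥ 1 : S_k ≥ k²}` (max ∅ = 0). -/
noncomputable def gStar {m : ℕ} (x : Fin m → ℕ) : ℕ :=
  sSup {k : ℕ | 1 ≤ k ∧ k ^ 2 ≤ pSum x k}

/-- The `ν`-index: `ν = max {j ≥ 1 : Σ_{i : x_i ≥ j} x_i ≥ j²}` (max ∅ = 0). -/
noncomputable def nuIndex {m : ℕ} (x : Fin m → ℕ) : ℕ :=
  sSup {j : ℕ | 1 ≤ j ∧ j ^ 2 ≤ ∑ i ∈ Finset.univ.filter (fun i => j ≤ x i), x i}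

/-- The tempered `ν̄`-index: `ν̄ = max {1 ≤ j ≤ m : Σ_{i : x_i ≥ j} x_i ≥ j²}` (max ∅ = 0). -/
noncomputable def nuBar {m : ℕ} (x : Fin m → ℕ) : ℕ :=
  sSup {j : ℕ | 1 ≤ j ∧ j ≤ m ∧ j ^ 2 ≤ ∑ i ∈ Finset.univ.filter (fun i => j ≤ x i), x i}

/-- The parametric index `ν_α = max {j ≥ 1 : Σ_{i : x_i ≥ j} x_i^α ≥ j^(α+1)}` (max ∅ = 0),
with real powers. -/
noncomputable def nuAlpha {m : ℕ} (x : Fin m → ℕ) (α : ℝ) : ℕ :=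
  sSup {j : ℕ | 1 ≤ j ∧
    (j : ℝ) ^ (α + 1) ≤ ∑ i ∈ Finset.univ.filter (fun i => j ≤ x i), (x i : ℝ) ^ α}

/-- Extension of a finite citation vector by fictitious zeros. -/
def extByZero {m : ℕ} (x : Fin m → ℕ) (i : ℕ) : ℕ :=
  if h : i < m then x ⟨i, h⟩ else 0

theorem Nat.sSup_mem_of_pos {s : Set ℕ} (hs : BddAbove s) (hpos : 0 < sSup s) : sSup s ∈ s := by
  refine Nat.sSup_mem ?_ hs
  by_contra hne
  rw [Set.not_nonempty_iff_eq_empty.mp hne, csSup_empty] at hpos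
  exact lt_irrefl _ hpos

section CitationVector

variable {m : ℕ} (x : Fin m → ℕ)

def sumAtLeast (j : ℕ) : ℕ :=
  ∑ i ∈ univ.filter (fun i => j ≤ x i), x i

theorem sumAtLeast_antitone : Antitone (sumAtLeast x) :=
  fun _ _ hjk => sum_le_sum_of_subset (monotone_filter_right _ fun _ _ => hjk.trans)

theorem sq_le_sumAtLeast_of_le_mStar {j : ℕ} (hj : j ≤ mStar x j) : j ^ 2 ≤ sumAtLeast x j :=
  calc j ^ 2 ≤ mStar x j * j := by rw [sq]; exact Nat.mul_le_mul_right j hj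
    _ ≤ sumAtLeast x j := by
      rw [mStar, ← smul_eq_mul]
      exact card_nsmul_le_sum _ _ _ fun _ hi => (mem_filter.mp hi).2

theorem mStar_le (j : ℕ) : mStar x j ≤ m :=
  (card_filter_le _ _).trans (card_fin m).le

theorem le_apply_iff_lt_mStar {x : Fin m → ℕ} (hx : Antitone x) (j : ℕ) (i : Fin m) :
    j ≤ x i ↔ (i : ℕ) < mStar x j := by
  constructor
  · intro hi
    have hsub : Iic i ⊆ univ.filter fun k => j ≤ x k :=
      fun k hk => mem_filter.mpr ⟨mem_univ k, hi.trans (hx (mem_Iic.mp hk))⟩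
    have hcard := card_le_card hsub
    rw [Fin.card_Iic] at hcard
    exact hcard
  · intro hi
    by_contra! hlt
    have hsub : univ.filter (fun k => j ≤ x k) ⊆ Iio i := fun k hk =>
      mem_Iio.mpr <| lt_of_not_ge fun hik => (mem_filter.mp hk).2.not_gt ((hx hik).trans_lt hlt)
    have hcard := card_le_card hsub
    rw [Fin.card_Iio] at hcard
    exact hcard.not_gt hi

theorem sumAtLeast_eq_pSum_mStar {x : Fin m → ℕ} (hx : Antitone x) (j : ℕ) :
    sumAtLeast x j = pSum x (mStar x j) := by
  rw [sumAtLeast, pSum, ← sum_filter]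
  exact sum_congr (filter_congr fun i _ => le_apply_iff_lt_mStar hx j i) fun _ _ => rfl

theorem hIndex_le : hIndex x ≤ m :=
  csSup_le' fun _ hj => hj.2.trans (mStar_le x _)

theorem bddAbove_nuBar_set : BddAbove {j : ℕ | 1 ≤ j ∧ j ≤ m ∧ j ^ 2 ≤ sumAtLeast x j} :=
  ⟨m, fun _ hj => hj.2.1⟩

theorem hIndex_le_nuBar : hIndex x ≤ nuBar x := by
  rcases Nat.eq_zero_or_pos (hIndex x) with hzero | hpos
  · omega
  have hmem : hIndex x ∈ {j : ℕ | 1 ≤ j ∧ j ≤ mStar x j} :=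
    Nat.sSup_mem_of_pos ⟨m, fun _ hj => hj.2.trans (mStar_le x _)⟩ hpos
  exact le_csSup (bddAbove_nuBar_set x)
    ⟨hmem.1, hIndex_le x, sq_le_sumAtLeast_of_le_mStar x hmem.2⟩

theorem lt_nuBar_iff (j : ℕ) :
    j < nuBar x ↔ j + 1 ≤ m ∧ (j + 1) ^ 2 ≤ sumAtLeast x (j + 1) := by
  constructor
  · intro hj
    obtain ⟨-, hνm, hνsum⟩ : nuBar x ∈ {j : ℕ | 1 ≤ j ∧ j ≤ m ∧ j ^ 2 ≤ sumAtLeast x j} :=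
      Nat.sSup_mem_of_pos (bddAbove_nuBar_set x) (show 0 < nuBar x by omega)
    refine ⟨by omega, ?_⟩
    calc (j + 1) ^ 2 ≤ nuBar x ^ 2 := Nat.pow_le_pow_left hj 2
      _ ≤ sumAtLeast x (nuBar x) := hνsum
      _ ≤ sumAtLeast x (j + 1) := sumAtLeast_antitone x hj
  · rintro ⟨hjm, hjsum⟩
    exact le_csSup (bddAbove_nuBar_set x) ⟨by omega, hjm, hjsum⟩

end CitationVector

theorem stmt11_general {m : ℕ} (x : Fin m → ℕ) (hx : Antitone x) :
    hIndex x = nuBar x ↔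
      (hIndex x = m ∨ (hIndex x < m ∧
        pSum x (mStar x (hIndex x + 1)) < (hIndex x + 1) ^ 2)) := by
  have hcrit := lt_nuBar_iff x (hIndex x)
  rw [sumAtLeast_eq_pSum_mStar hx] at hcrit
  rw [← not_ne_iff, ← (hIndex_le_nuBar x).lt_iff_ne, hcrit]
  have := hIndex_le x
  omega

theorem stmt11 {m : ℕ} (hm : 1 ≤ m) (x : Fin m → ℕ) (hx : Antitone x) :
    hIndex x = nuBar x ↔
      (hIndex x = m ∨ (hIndex x < m ∧
        pSum x (mStar x (hIndex x + 1)) < (hIndex x + 1) ^ 2)) :=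
  stmt11_general x hx
end

section
/- Let x₁ ≥ x₂ ≥ ... ≥ x_m be a citation vector, ν̄ its tempered ν̄-index and g its g-index, with S_k = x₁ + ... + x_k for 1 ≤ k ≤ m. Then ν̄ = g if and only if either ν̄ = m, or ν̄ < m and S_{ν̄+1} < (ν̄+1)². -/
/-!
For a non-increasing vector the averages `S_k / k` are non-increasing, so `S_{k+1} ≥ (k+1)²`
forces `S_k ≥ k (k+1) ≥ k²`: the `g`-condition is downward closed and `k ≤ g ↔ S_k ≥ k²` for
`k ≤ m`. Each `j` admitted by `ν̄` satisfies `S_j ≥ j²`, because either all papers with at least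
`j` citations are among the first `j`, or the first `j` papers all have at least `j` citations.
Hence `ν̄ ≤ g ≤ m`, and `ν̄ = g` unless `ν̄ < m` and `ν̄ + 1` still meets the `g`-condition.
-/

open Finset

theorem Antitone.nsmul_sum_range_succ_le {M : Type*} [AddCommMonoid M] [PartialOrder M]
    [IsOrderedAddMonoid M] {f : ℕ → M} (hf : Antitone f) (k : ℕ) :
    k • ∑ i ∈ range (k + 1), f i ≤ (k + 1) • ∑ i ∈ range k, f i := by
  have hfk : k • f k ≤ ∑ i ∈ range k, f i := by
    simpa using card_nsmul_le_sum (range k) f (f k) fun i hi => hf (mem_range.1 hi).le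
  calc k • ∑ i ∈ range (k + 1), f i = k • ∑ i ∈ range k, f i + k • f k := by
        rw [sum_range_succ, nsmul_add]
    _ ≤ k • ∑ i ∈ range k, f i + ∑ i ∈ range k, f i := add_le_add_right hfk _
    _ = (k + 1) • ∑ i ∈ range k, f i := by rw [succ_nsmul]

theorem Antitone.sq_le_sum_range_of_succ {f : ℕ → ℕ} (hf : Antitone f) {k : ℕ}
    (h : (k + 1) ^ 2 ≤ ∑ i ∈ range (k + 1), f i) : k ^ 2 ≤ ∑ i ∈ range k, f i := by
  have havg := hf.nsmul_sum_range_succ_le k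
  simp only [smul_eq_mul] at havg
  nlinarith

theorem Antitone.sq_le_sum_range_of_le {f : ℕ → ℕ} (hf : Antitone f) {k n : ℕ} (hkn : k ≤ n)
    (h : n ^ 2 ≤ ∑ i ∈ range n, f i) : k ^ 2 ≤ ∑ i ∈ range k, f i := by
  induction n with
  | zero => simp_all
  | succ n ih =>
    rcases hkn.eq_or_lt with rfl | hlt
    · exact h
    · exact ih (Nat.le_of_lt_succ hlt) (hf.sq_le_sum_range_of_succ h)

theorem Antitone.sq_le_sum_range_of_sq_le_sum_filter {f : ℕ → ℕ} (hf : Antitone f)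
    (s : Finset ℕ) {j : ℕ} (h : j ^ 2 ≤ ∑ i ∈ s with j ≤ f i, f i) :
    j ^ 2 ≤ ∑ i ∈ range j, f i := by
  by_cases hs : ∃ i ∈ s, j ≤ f i ∧ j ≤ i
  · obtain ⟨i, -, hji, hij⟩ := hs
    have hlow : ∀ l ∈ range j, j ≤ f l := fun l hl =>
      hji.trans (hf ((mem_range.1 hl).le.trans hij))
    simpa [sq] using card_nsmul_le_sum (range j) f j hlow
  · refine h.trans (sum_le_sum_of_subset fun i hi => ?_)
    rw [mem_filter] at hi
    exact mem_range.2 (not_le.1 fun hij => hs ⟨i, hi.1, hi.2, hij⟩)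

theorem extByZero_antitone {m : ℕ} {x : Fin m → ℕ} (hx : Antitone x) :
    Antitone (extByZero x) := by
  intro i l hil
  unfold extByZero
  split_ifs with hl hi hi
  · exact hx (Fin.mk_le_mk.2 hil)
  · omega
  · exact Nat.zero_le _
  · exact le_rfl

theorem sum_filter_eq_sum_range_extByZero {m : ℕ} (x : Fin m → ℕ) (p : ℕ → ℕ → Prop)
    [∀ i v, Decidable (p i v)] :
    ∑ i ∈ univ.filter (fun i : Fin m => p i (x i)), x i =
      ∑ i ∈ range m with p i (extByZero x i), extByZero x i := by
  rw [sum_filter, sum_filter,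
    ← Fin.sum_univ_eq_sum_range (fun i => if p i (extByZero x i) then extByZero x i else 0)]
  simp [extByZero]

theorem pSum_eq_sum_range {m : ℕ} (x : Fin m → ℕ) (k : ℕ) :
    pSum x k = ∑ i ∈ range k, extByZero x i := by
  rw [pSum, ← sum_filter, sum_filter_eq_sum_range_extByZero x fun i _ => i < k]
  refine sum_subset (fun i hi => ?_) (fun i hi hi' => ?_)
  · simp only [mem_filter, mem_range] at hi ⊢
    omega
  · simp only [mem_range, mem_filter, not_and, not_lt] at hi hi'
    simp only [extByZero, dite_eq_right_iff]
    omega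

section Indices

variable {m : ℕ} {x : Fin m → ℕ}

theorem sq_le_pSum_of_sq_le_sum_filter (hx : Antitone x) {j : ℕ}
    (h : j ^ 2 ≤ ∑ i ∈ univ.filter (fun i => j ≤ x i), x i) : j ^ 2 ≤ pSum x j := by
  rw [sum_filter_eq_sum_range_extByZero x fun _ v => j ≤ v] at h
  rw [pSum_eq_sum_range]
  exact (extByZero_antitone hx).sq_le_sum_range_of_sq_le_sum_filter _ h

theorem gIndex_le (x : Fin m → ℕ) : gIndex x ≤ m :=
  csSup_le' fun _ hk => hk.2.1

theorem le_gIndex_iff (hx : Antitone x) {k : ℕ} (hk : k ≤ m) :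
    k ≤ gIndex x ↔ k ^ 2 ≤ pSum x k := by
  rcases Nat.eq_zero_or_pos k with rfl | hk0
  · simp
  have hbdd : BddAbove {k : ℕ | 1 ≤ k ∧ k ≤ m ∧ k ^ 2 ≤ pSum x k} := ⟨m, fun _ hk => hk.2.1⟩
  refine ⟨fun hkg => ?_, fun h => le_csSup hbdd ⟨hk0, hk, h⟩⟩
  have hne : {k : ℕ | 1 ≤ k ∧ k ≤ m ∧ k ^ 2 ≤ pSum x k}.Nonempty := by
    by_contra hempty
    rw [Set.not_nonempty_iff_eq_empty] at hempty
    rw [gIndex, hempty, csSup_empty] at hkg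
    exact hk0.not_ge hkg
  obtain ⟨-, -, hg⟩ := Nat.sSup_mem hne hbdd
  rw [pSum_eq_sum_range] at hg ⊢
  exact (extByZero_antitone hx).sq_le_sum_range_of_le hkg hg

theorem nuBar_le_gIndex (hx : Antitone x) : nuBar x ≤ gIndex x :=
  csSup_le' fun _ ⟨_, hjm, hj⟩ =>
    (le_gIndex_iff hx hjm).2 (sq_le_pSum_of_sq_le_sum_filter hx hj)

end Indices

theorem stmt12_general {m : ℕ} (x : Fin m → ℕ) (hx : Antitone x) :
    nuBar x = gIndex x ↔
      (nuBar x = m ∨ (nuBar x < m ∧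
        pSum x (nuBar x + 1) < (nuBar x + 1) ^ 2)) := by
  have hνg := nuBar_le_gIndex hx
  have hgm := gIndex_le x
  by_cases hν : nuBar x < m
  · have := le_gIndex_iff hx (k := nuBar x + 1) hν
    omega
  · omega

theorem stmt12 {m : ℕ} (hm : 1 ≤ m) (x : Fin m → ℕ) (hx : Antitone x) :
    nuBar x = gIndex x ↔
      (nuBar x = m ∨ (nuBar x < m ∧
        pSum x (nuBar x + 1) < (nuBar x + 1) ^ 2)) :=
  stmt12_general x hx
end

section
/- The ν-index is monotone with respect to component-wise dominance: if citation vectors x and y (each extended by zeros to a common length) satisfy x_i ≤ y_i for all i, then ν(x) ≤ ν(y). -/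
open Finset

/-! After padding both vectors with zeros to a common length, `Σ_{x_i ≥ j} x_i` is the sum of
`t ↦ if j ≤ t then t else 0` over the entries; this summand is monotone and vanishes at `0`, so
dominance gives the inequality for every `j`. Hence the set whose maximum is `ν(x)` lies inside
the one for `ν(y)`, which is bounded above by `Σ y_i`. -/

section ExtByZero

variable {M : Type*} [AddCommMonoid M]

lemma sum_eq_sum_range_extByZero {m : ℕ} (x : Fin m → ℕ) {g : ℕ → M} (hg : g 0 = 0)
    {N : ℕ} (hN : m ≤ N) :
    ∑ i, g (x i) = ∑ k ∈ range N, g (extByZero x k) := by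
  calc ∑ i, g (x i) = ∑ k ∈ range m, g (extByZero x k) := by
        rw [← Fin.sum_univ_eq_sum_range]
        simp [extByZero]
    _ = ∑ k ∈ range N, g (extByZero x k) := by
        refine sum_subset (range_subset_range.2 hN) fun k _ hk => ?_
        rw [extByZero, dif_neg (by simpa using hk), hg]

lemma sum_le_sum_of_extByZero_le [PartialOrder M] [IsOrderedAddMonoid M]
    {m n : ℕ} {x : Fin m → ℕ} {y : Fin n → ℕ} (hdom : ∀ i, extByZero x i ≤ extByZero y i)
    {g : ℕ → M} (hg0 : g 0 = 0) (hg : Monotone g) :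
    ∑ i, g (x i) ≤ ∑ i, g (y i) := by
  rw [sum_eq_sum_range_extByZero x hg0 (le_max_left m n),
    sum_eq_sum_range_extByZero y hg0 (le_max_right m n)]
  exact sum_le_sum fun k _ => hg (hdom k)

end ExtByZero

lemma monotone_ite_le_self (j : ℕ) : Monotone fun t : ℕ => if j ≤ t then t else 0 := by
  intro a b hab
  dsimp only
  split_ifs <;> omega

lemma sum_filter_le_sum_filter_of_extByZero_le {m n : ℕ} {x : Fin m → ℕ} {y : Fin n → ℕ}
    (hdom : ∀ i, extByZero x i ≤ extByZero y i) (j : ℕ) :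
    ∑ i ∈ univ.filter (fun i => j ≤ x i), x i ≤ ∑ i ∈ univ.filter (fun i => j ≤ y i), y i := by
  simpa only [sum_filter] using
    sum_le_sum_of_extByZero_le hdom (g := fun t => if j ≤ t then t else 0) (ite_self 0)
      (monotone_ite_le_self j)

lemma bddAbove_nuIndex_set {n : ℕ} (y : Fin n → ℕ) :
    BddAbove {j : ℕ | 1 ≤ j ∧ j ^ 2 ≤ ∑ i ∈ univ.filter (fun i => j ≤ y i), y i} := by
  refine ⟨∑ i, y i, fun j ⟨hj, hjs⟩ => ?_⟩
  calc j ≤ j ^ 2 := by nlinarith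
    _ ≤ _ := hjs
    _ ≤ ∑ i, y i := sum_le_sum_of_subset (filter_subset _ _)

theorem stmt15_general {m n : ℕ}
    (x : Fin m → ℕ) (y : Fin n → ℕ)
    (hdom : ∀ i : ℕ, extByZero x i ≤ extByZero y i) :
    nuIndex x ≤ nuIndex y :=
  csSup_le_csSup' (bddAbove_nuIndex_set y) fun j ⟨hj, hjs⟩ =>
    ⟨hj, hjs.trans (sum_filter_le_sum_filter_of_extByZero_le hdom j)⟩

theorem stmt15 {m n : ℕ} (hm : 1 ≤ m) (hn : 1 ≤ n)
    (x : Fin m → ℕ) (y : Fin n → ℕ) (hx : Antitone x) (hy : Antitone y)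
    (hdom : ∀ i : ℕ, extByZero x i ≤ extByZero y i) :
    nuIndex x ≤ nuIndex y :=
  stmt15_general x y hdom
end
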